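/- arXiv:math/0410360 — 13 statements merged into one kernel-verified Lean document; each statement's English description precedes it below -/
import Mathlib

section
/- Let k be a field of characteristic 3. For every l, m, n ∈ k with l, m, n all nonzero and m³ = n²l³, and every P ∈ k[t] with deg P ≤ 6, there exist b₄ ∈ k[t] with deg b₄ ≤ 4 and b₆ ∈ k[t] with deg b₆ ≤ 6 such that, with b₂ = t, the discriminant Δ = −b₂²(b₂b₆ − b₄²) + b₄³ equals l⁻³·(t¹² + l t¹⁰ + t³·P + m t² + n). -/
open Polynomial

theorem stmt1 {k : Type*} [Field k] [CharP k 3]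
    (l m n : k) (hl : l ≠ 0) (hm : m ≠ 0) (hn : n ≠ 0) (h : m ^ 3 = n ^ 2 * l ^ 3)
    (P : k[X]) (hP : P.degree ≤ 6) :
    ∃ b₄ b₆ : k[X], b₄.degree ≤ 4 ∧ b₆.degree ≤ 6 ∧
      -(X : k[X]) ^ 2 * (X * b₆ - b₄ ^ 2) + b₄ ^ 3 =
        C (l⁻¹ ^ 3) * (X ^ 12 + C l * X ^ 10 + X ^ 3 * P + C m * X ^ 2 + C n) := by
  set d : k := m ^ 2 / (l ^ 3 * n) with hd
  have hd3 : d ^ 3 = l⁻¹ ^ 3 * n := by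
    rw [hd]
    field_simp
    linear_combination (m ^ 3 + n ^ 2 * l ^ 3) * h
  have hd2 : d ^ 2 = l⁻¹ ^ 3 * m := by
    rw [hd]
    field_simp
    linear_combination h
  refine ⟨C l⁻¹ * X ^ 4 + C d, 2 * C l⁻¹ * C d * X ^ 3 - C (l⁻¹ ^ 3) * P, ?_, ?_, ?_⟩
  · compute_degree
  · apply le_trans (degree_sub_le _ _)
    simp only [max_le_iff]
    refine ⟨by compute_degree!, ?_⟩
    apply le_trans (degree_mul_le _ _)
    calc (C (l⁻¹ ^ 3) : k[X]).degree + P.degree ≤ 0 + 6 := add_le_add degree_C_le hP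
      _ = 6 := by norm_num
  · have e0 : (C (l⁻¹ ^ 3) : k[X]) = C l⁻¹ ^ 3 := by rw [← C_pow]
    have e4 : (C l⁻¹ : k[X]) * C l = 1 := by rw [← C_mul, inv_mul_cancel₀ hl, C_1]
    have e1 : (C d : k[X]) ^ 3 = C (l⁻¹ ^ 3) * C n := by
      rw [← C_pow, ← C_mul, hd3]
    have e2 : (C d : k[X]) ^ 2 = C (l⁻¹ ^ 3) * C m := by
      rw [← C_pow, ← C_mul, hd2]
    have h3 : (3 : k[X]) = 0 := by exact_mod_cast CharP.cast_eq_zero k[X] 3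
    linear_combination (-(X : k[X]) ^ 12 - C l * X ^ 10) * e0
      + (-(C l⁻¹ : k[X]) ^ 2 * X ^ 10) * e4 + e1 + (X : k[X]) ^ 2 * e2
      + ((C l⁻¹) ^ 2 * C d * X ^ 8 + C l⁻¹ * (C d) ^ 2 * X ^ 4) * h3
end

section
/- Let k be a field of characteristic 3, let c ∈ k with c ≠ 0, let b₂ = c (a nonzero constant, i.e. b₂, viewed as a degree-≤2 polynomial, has a double root at infinity), let b₄ = φ₄t⁴ + φ₃t³ + φ₂t² + φ₁t + φ₀ ∈ k[t], and let b₆ ∈ k[t] with deg b₆ ≤ 6. Then there exists Q ∈ k[t] with deg Q ≤ 6 such that Δ = −b₂²(b₂b₆ − b₄²) + b₄³ = φ₄³t¹² + φ₃³t⁹ + c²φ₄²t⁸ − c²φ₄φ₃t⁷ + Q. In particular the coefficients of t¹¹ and t¹⁰ in Δ vanish; and if Δ is monic of degree 12 then φ₄ = 1 and Δ = t¹² + l t⁹ + m t⁸ − n t⁷ + Q with l = φ₃³, m = c² ≠ 0, n = c²φ₃, which satisfy n³ = l m³. -/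
/-!
Write `b₄ = φ₄t⁴ + φ₃t³ + r` with `deg r ≤ 2`. In characteristic 3 cubing is additive, so
`b₄³ = φ₄³t¹² + φ₃³t⁹ + r³`, while `b₂ = c` only contributes `c²b₄² - c³b₆`, whose terms of degree
above 6 are `c²φ₄²t⁸ + 2c²φ₄φ₃t⁷ = c²φ₄²t⁸ - c²φ₄φ₃t⁷`. Nothing of degree 10 or 11 appears, and if
`Δ` is monic of degree 12 then `φ₄³ = 1`, which forces `φ₄ = 1` since Frobenius is injective.
-/

open Polynomial

namespace CharThree

variable {R : Type*} [CommRing R]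

/-- The part of degree at most 6 of `-c²(c b₆ - b₄²) + b₄³` for `b₄ = φ₄t⁴ + φ₃t³ + r`. -/
noncomputable def discriminantTail (c φ₄ φ₃ : R) (r b₆ : R[X]) : R[X] :=
  -C c ^ 3 * b₆ + C c ^ 2 * (C φ₃ ^ 2 * X ^ 6 + 2 * (C φ₄ * X ^ 4 + C φ₃ * X ^ 3) * r + r ^ 2)
    + r ^ 3

theorem discriminant_eq_add_discriminantTail [CharP R 3] (c φ₄ φ₃ : R) (r b₆ : R[X]) :
    -C c ^ 2 * (C c * b₆ - (C φ₄ * X ^ 4 + C φ₃ * X ^ 3 + r) ^ 2)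
        + (C φ₄ * X ^ 4 + C φ₃ * X ^ 3 + r) ^ 3
      = C (φ₄ ^ 3) * X ^ 12 + C (φ₃ ^ 3) * X ^ 9 + C (c ^ 2 * φ₄ ^ 2) * X ^ 8
          - C (c ^ 2 * φ₄ * φ₃) * X ^ 7 + discriminantTail c φ₄ φ₃ r b₆ := by
  have h3 : (3 : R[X]) = 0 := by exact_mod_cast CharP.cast_eq_zero R[X] 3
  rw [discriminantTail, add_pow_char _ (p := 3), add_pow_char _ (p := 3)]
  simp only [map_mul, map_pow]
  linear_combination C φ₄ * C φ₃ * C c ^ 2 * X ^ 7 * h3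

theorem degree_discriminantTail_le {c φ₄ φ₃ : R} {r b₆ : R[X]} (hr : r.degree ≤ 2)
    (hb₆ : b₆.degree ≤ 6) : (discriminantTail c φ₄ φ₃ r b₆).degree ≤ 6 := by
  have hC : ∀ n : ℕ, (C c ^ n).degree ≤ 0 := fun n => by rw [← map_pow]; exact degree_C_le
  have hcross : (2 * (C φ₄ * X ^ 4 + C φ₃ * X ^ 3) * r).degree ≤ 6 := by
    have hlin : (2 * (C φ₄ * X ^ 4 + C φ₃ * X ^ 3) : R[X]).degree ≤ 4 := by compute_degree
    exact (degree_mul_le_of_le hlin hr).trans (by norm_num)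
  have hquad : (C φ₃ ^ 2 * X ^ 6 + 2 * (C φ₄ * X ^ 4 + C φ₃ * X ^ 3) * r + r ^ 2).degree ≤ 6 :=
    degree_add_le_of_degree_le (degree_add_le_of_degree_le (by compute_degree!) hcross)
      ((degree_pow_le_of_le 2 hr).trans (by norm_num))
  refine degree_add_le_of_degree_le (degree_add_le_of_degree_le ?_ ?_) ?_
  · rw [neg_mul, degree_neg]
    simpa using degree_mul_le_of_le (hC 3) hb₆
  · simpa using degree_mul_le_of_le (hC 2) hquad
  · exact (degree_pow_le_of_le 3 hr).trans (by norm_num)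

theorem coeff_leadingTerms_add_of_nine_lt {a b d e : R} {Q : R[X]} (hQ : Q.degree ≤ 6) {n : ℕ}
    (hn : 9 < n) :
    (C a * X ^ 12 + C b * X ^ 9 + C d * X ^ 8 - C e * X ^ 7 + Q).coeff n =
      if n = 12 then a else 0 := by
  have hQn : Q.coeff n = 0 :=
    coeff_eq_zero_of_degree_lt (hQ.trans_lt (by exact_mod_cast (by omega : 6 < n)))
  simp only [coeff_add, coeff_sub, coeff_C_mul_X_pow, hQn, if_neg (show n ≠ 9 by omega),
    if_neg (show n ≠ 8 by omega), if_neg (show n ≠ 7 by omega), add_zero, sub_zero]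

end CharThree

theorem stmt2 {k : Type*} [Field k] [CharP k 3]
    (c : k) (hc : c ≠ 0) (φ₄ φ₃ φ₂ φ₁ φ₀ : k)
    (b₆ : k[X]) (hb₆ : b₆.degree ≤ 6)
    (b₂ b₄ Δ : k[X])
    (hb₂ : b₂ = C c)
    (hb₄ : b₄ = C φ₄ * X ^ 4 + C φ₃ * X ^ 3 + C φ₂ * X ^ 2 + C φ₁ * X + C φ₀)
    (hΔ : Δ = -b₂ ^ 2 * (b₂ * b₆ - b₄ ^ 2) + b₄ ^ 3) :
    ∃ Q : k[X], Q.degree ≤ 6 ∧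
      Δ = C (φ₄ ^ 3) * X ^ 12 + C (φ₃ ^ 3) * X ^ 9 + C (c ^ 2 * φ₄ ^ 2) * X ^ 8
          - C (c ^ 2 * φ₄ * φ₃) * X ^ 7 + Q ∧
      Δ.coeff 11 = 0 ∧ Δ.coeff 10 = 0 ∧
      (Δ.Monic → Δ.degree = 12 →
        φ₄ = 1 ∧
        Δ = X ^ 12 + C (φ₃ ^ 3) * X ^ 9 + C (c ^ 2) * X ^ 8 - C (c ^ 2 * φ₃) * X ^ 7 + Q ∧
        c ^ 2 ≠ 0 ∧ (c ^ 2 * φ₃) ^ 3 = φ₃ ^ 3 * (c ^ 2) ^ 3) := by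
  have hΔ' : Δ = C (φ₄ ^ 3) * X ^ 12 + C (φ₃ ^ 3) * X ^ 9 + C (c ^ 2 * φ₄ ^ 2) * X ^ 8
      - C (c ^ 2 * φ₄ * φ₃) * X ^ 7
      + CharThree.discriminantTail c φ₄ φ₃ (C φ₂ * X ^ 2 + C φ₁ * X + C φ₀) b₆ := by
    rw [← CharThree.discriminant_eq_add_discriminantTail, hΔ, hb₂, hb₄]
    ring
  have hQ := CharThree.degree_discriminantTail_le (c := c) (φ₄ := φ₄) (φ₃ := φ₃)
    (r := C φ₂ * X ^ 2 + C φ₁ * X + C φ₀) (by compute_degree) hb₆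
  have hcoeff {n : ℕ} (hn : 9 < n) := hΔ' ▸ CharThree.coeff_leadingTerms_add_of_nine_lt hQ hn
  refine ⟨_, hQ, hΔ', by simpa using hcoeff (n := 11) (by norm_num),
    by simpa using hcoeff (n := 10) (by norm_num), fun hmonic hdeg => ?_⟩
  have hφ₄ : φ₄ = 1 := by
    have hcube : φ₄ ^ 3 = 1 := by
      rw [← hmonic.coeff_natDegree, natDegree_eq_of_degree_eq_some hdeg]
      simpa using (hcoeff (n := 12) (by norm_num)).symm
    exact frobenius_inj k 3 (by simpa [frobenius_def] using hcube)
  refine ⟨hφ₄, by rw [hΔ', hφ₄]; simp, pow_ne_zero 2 hc, by ring⟩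
end

section
/- Let k be an algebraically closed field of characteristic 3. For every l, m, n ∈ k with l, m, n all nonzero and n³ = l m³, and every P ∈ k[t] with deg P ≤ 6, there exist a nonzero constant c ∈ k, a polynomial b₄ ∈ k[t] with deg b₄ ≤ 4, and a polynomial b₆ ∈ k[t] with deg b₆ ≤ 6 such that, with b₂ = c, the discriminant Δ = −b₂²(b₂b₆ − b₄²) + b₄³ equals t¹² + l t⁹ + m t⁸ − n t⁷ + P. -/
open Polynomial

theorem stmt3 {k : Type*} [Field k] [IsAlgClosed k] [CharP k 3]
    (l m n : k) (hl : l ≠ 0) (hm : m ≠ 0) (hn : n ≠ 0) (h : n ^ 3 = l * m ^ 3)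
    (P : k[X]) (hP : P.degree ≤ 6) :
    ∃ c : k, c ≠ 0 ∧ ∃ b₄ b₆ : k[X], b₄.degree ≤ 4 ∧ b₆.degree ≤ 6 ∧
      -(C c) ^ 2 * (C c * b₆ - b₄ ^ 2) + b₄ ^ 3 =
        X ^ 12 + C l * X ^ 9 + C m * X ^ 8 - C n * X ^ 7 + P := by
  obtain ⟨c, hc⟩ : ∃ c : k, c ^ 2 = m := IsAlgClosed.exists_pow_nat_eq m two_pos
  have hc0 : c ≠ 0 := by rintro rfl; simp at hc; exact hm hc.symm
  set a : k := n / m with ha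
  set d : k := (c ^ 3)⁻¹ with hd
  refine ⟨c, hc0, X ^ 4 + C a * X ^ 3, C d * (C (m * a ^ 2) * X ^ 6 - P), ?_, ?_, ?_⟩
  · apply le_trans (degree_add_le _ _)
    simp only [degree_X_pow, max_le_iff]
    constructor
    · norm_num
    · apply le_trans (degree_mul_le _ _)
      apply le_trans (add_le_add degree_C_le (le_of_eq (degree_X_pow 3)))
      norm_num
  · apply le_trans (degree_mul_le _ _)
    apply le_trans (add_le_add degree_C_le (degree_sub_le _ _))
    simp only [zero_add, max_le_iff]
    constructor
    · apply le_trans (degree_mul_le _ _)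
      apply le_trans (add_le_add degree_C_le (le_of_eq (degree_X_pow 6)))
      norm_num
    · exact hP
  · have h3 : (3 : k[X]) = 0 := by exact_mod_cast CharP.cast_eq_zero k[X] 3
    have hcube : (X ^ 4 + C a * X ^ 3 : k[X]) ^ 3 = X ^ 12 + C l * X ^ 9 := by
      rw [add_pow_char]
      · rw [mul_pow, ← map_pow, ← pow_mul, ← pow_mul]
        congr 2
        congr 1; rw [ha]; field_simp
        linear_combination h
    have hc2 : (C c : k[X]) ^ 2 = C m := by rw [← map_pow, hc]
    have hinv : (C c : k[X]) ^ 3 * C d = 1 := by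
      rw [← map_pow, ← map_mul, mul_inv_cancel₀ (pow_ne_zero 3 hc0), map_one]
    have hsp : (C (m * a ^ 2) : k[X]) = C m * C a ^ 2 := by rw [map_mul, map_pow]
    have hma : (C m : k[X]) * C a = C n := by
      rw [← map_mul]; congr 1; rw [ha]; field_simp
    linear_combination hcube + (X ^ 4 + C a * X ^ 3) ^ 2 * hc2
      - (C (m * a ^ 2) * X ^ 6 - P) * hinv
      + (2 : k[X]) * X ^ 7 * hma
      + (C n * X ^ 7 + C (m * a^2) * X^6 - C m * C a^2 * X^6) * h3
      - (4 : k[X]) * X ^ 6 * hsp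
end

section
/- Let k be a field of characteristic 3, let l, m, n ∈ k with m ≠ 0, let P ∈ k[t] with deg P ≤ 6, and set Δ = t¹² + l t⁹ + m t⁸ − n t⁷ + P ∈ k[t]. Then for all p, q, r ∈ k (not necessarily distinct), the polynomial (t−p)³(t−q)³(t−r)³ does not divide Δ. (Consequently, a rational elliptic surface in characteristic 3 with only multiplicative singular fibres and with b₂ having a repeated root cannot have three multiplicative fibres each of multiplicity at least three.) -/
/-!
In characteristic 3 we have `(t - a)³ = t³ - a³`, so `(t-p)³(t-q)³(t-r)³ = g(t³)` for a monic
cubic `g`. If `Δ = g(t³) Q`, then `deg Q ≤ 3`, and 2 is the only exponent of `Q` that is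
congruent to 2 mod 3. So the coefficient of `t^(3e+2)` in `Δ` is `g_e Q₂`. At `e = 3` it is
`Q₂`, which is the coefficient of `t¹¹`, namely 0. Hence the coefficient `m` of `t⁸` (`e = 2`)
is 0 as well.
-/

open Polynomial

namespace Polynomial

theorem X_sub_C_pow_expChar {R : Type*} [CommRing R] {p : ℕ} [ExpChar R p] (a : R) :
    (X - C a) ^ p = expand R p (X - C (a ^ p)) := by
  rw [sub_pow_expChar, ← C_pow, map_sub, expand_X, expand_C]

theorem coeff_expand_mul_of_natDegree_le {R : Type*} [CommSemiring R] {p j : ℕ} (g : R[X])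
    {Q : R[X]} (hQ : Q.natDegree ≤ p) (hj : 0 < j) (hjp : j < p) (d : ℕ) :
    (expand R p g * Q).coeff (p * d + j) = g.coeff d * Q.coeff j := by
  rw [coeff_mul, Finset.sum_eq_single ⟨p * d, j⟩, coeff_expand_mul' (by omega)]
  · rintro ⟨i, k⟩ hik hne
    rw [Finset.HasAntidiagonal.mem_antidiagonal] at hik
    rcases lt_or_ge p k with hpk | hkp
    · rw [coeff_eq_zero_of_natDegree_lt (hQ.trans_lt hpk), mul_zero]
    · rw [coeff_expand (by omega), if_neg, zero_mul]
      rintro ⟨c, rfl⟩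
      have hmod := congrArg (· % p) hik
      simp only [Nat.mul_add_mod, Nat.mod_eq_of_lt hjp] at hmod
      rcases hkp.lt_or_eq with hkp | rfl
      · rw [Nat.mod_eq_of_lt hkp] at hmod
        obtain rfl : k = j := hmod
        exact hne (by rw [show p * c = p * d by omega])
      · rw [Nat.mod_self] at hmod
        omega
  · exact fun h => (h (by simp)).elim

theorem coeff_mul_add_eq_zero_of_expand_dvd {R : Type*} [CommRing R] {p j : ℕ} {g Δ : R[X]}
    (hg : g.Monic) (hΔ : Δ.natDegree ≤ p * (g.natDegree + 1)) (hj : 0 < j) (hjp : j < p)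
    (htop : Δ.coeff (p * g.natDegree + j) = 0) (hdvd : expand R p g ∣ Δ) (e : ℕ) :
    Δ.coeff (p * e + j) = 0 := by
  obtain ⟨Q, rfl⟩ := hdvd
  have hQ : Q.natDegree ≤ p := by
    rcases eq_or_ne Q 0 with rfl | hQ0
    · simp
    rw [(hg.expand (by omega)).natDegree_mul' hQ0, natDegree_expand] at hΔ
    nlinarith
  rw [coeff_expand_mul_of_natDegree_le g hQ hj hjp, hg.coeff_natDegree, one_mul] at htop
  rw [coeff_expand_mul_of_natDegree_le g hQ hj hjp, htop, mul_zero]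

end Polynomial

theorem stmt5 {k : Type*} [Field k] [CharP k 3]
    (l m n : k) (hm : m ≠ 0) (P : k[X]) (hP : P.degree ≤ 6)
    (Δ : k[X])
    (hΔ : Δ = X ^ 12 + C l * X ^ 9 + C m * X ^ 8 - C n * X ^ 7 + P) :
    ∀ p q r : k, ¬ ((X - C p) ^ 3 * (X - C q) ^ 3 * (X - C r) ^ 3 ∣ Δ) := by
  intro p q r hdvd
  set g : k[X] := (X - C (p ^ 3)) * (X - C (q ^ 3)) * (X - C (r ^ 3))
  have hg : g.Monic := ((monic_X_sub_C _).mul (monic_X_sub_C _)).mul (monic_X_sub_C _)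
  have hg3 : g.natDegree = 3 := by
    simp only [g, natDegree_mul (X_sub_C_ne_zero _) (X_sub_C_ne_zero _),
      natDegree_mul (mul_ne_zero (X_sub_C_ne_zero _) (X_sub_C_ne_zero _)) (X_sub_C_ne_zero _),
      natDegree_X_sub_C]
  rw [X_sub_C_pow_expChar p, X_sub_C_pow_expChar q, X_sub_C_pow_expChar r, ← map_mul,
    ← map_mul] at hdvd
  have hPcoeff : ∀ i, 6 < i → P.coeff i = 0 := fun i hi =>
    coeff_eq_zero_of_degree_lt (hP.trans_lt (by exact_mod_cast hi))
  have hΔdeg : Δ.natDegree ≤ 3 * (g.natDegree + 1) := by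
    rw [hg3, hΔ]
    compute_degree
    exact max_le le_rfl (natDegree_le_of_degree_le (hP.trans (by norm_num)))
  have h11 : Δ.coeff (3 * g.natDegree + 2) = 0 := by
    simp [hg3, hΔ, coeff_X_pow, coeff_C_mul, hPcoeff]
  have h8 : Δ.coeff (3 * 2 + 2) = m := by
    simp [hΔ, coeff_X_pow, coeff_C_mul, hPcoeff]
  exact hm (h8 ▸ coeff_mul_add_eq_zero_of_expand_dvd hg hΔdeg two_pos (by norm_num) h11 hdvd 2)
end

section
/- Let k be a field of characteristic 3, let ε₀ ∈ k, let c₃ ∈ k[t] with deg c₃ ≤ 3 and c₅ ∈ k[t] with deg c₅ ≤ 5. Set b₂ = ε₀t, b₄ = −t·c₃, b₆ = t·c₅, and Δ = −b₂²(b₂b₆ − b₄²) + b₄³. Then there exist α, β, σ ∈ k and polynomials P₃, P₁ ∈ k[t] with deg P₃ ≤ 3 and deg P₁ ≤ 1 such that Δ = −α³t¹² + α²β²t¹⁰ + t⁶·P₃ + β²t⁴·P₁ − σ³t³. In particular, the coefficient of t¹¹ in Δ vanishes. -/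
open Polynomial

theorem stmt6 {k : Type*} [Field k] [CharP k 3]
    (ε₀ : k) (c₃ c₅ : k[X]) (hc₃ : c₃.degree ≤ 3) (hc₅ : c₅.degree ≤ 5)
    (b₂ b₄ b₆ Δ : k[X])
    (hb₂ : b₂ = C ε₀ * X) (hb₄ : b₄ = -(X * c₃)) (hb₆ : b₆ = X * c₅)
    (hΔ : Δ = -b₂ ^ 2 * (b₂ * b₆ - b₄ ^ 2) + b₄ ^ 3) :
    ∃ (α β σ : k) (P₃ P₁ : k[X]), P₃.degree ≤ 3 ∧ P₁.degree ≤ 1 ∧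
      Δ = -C α ^ 3 * X ^ 12 + C α ^ 2 * C β ^ 2 * X ^ 10 + X ^ 6 * P₃
          + C β ^ 2 * X ^ 4 * P₁ - C σ ^ 3 * X ^ 3 ∧
      Δ.coeff 11 = 0 := by
  have hn3 : c₃.natDegree < 4 :=
    lt_of_le_of_lt (Polynomial.natDegree_le_iff_degree_le.mpr hc₃) (by norm_num)
  have hn5 : c₅.natDegree < 6 :=
    lt_of_le_of_lt (Polynomial.natDegree_le_iff_degree_le.mpr hc₅) (by norm_num)
  set A0 := c₃.coeff 0 with hA0
  set A1 := c₃.coeff 1 with hA1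
  set A2 := c₃.coeff 2 with hA2
  set A3 := c₃.coeff 3 with hA3
  set B0 := c₅.coeff 0 with hB0
  set B1 := c₅.coeff 1 with hB1
  set B2 := c₅.coeff 2 with hB2
  set B3 := c₅.coeff 3 with hB3
  set B4 := c₅.coeff 4 with hB4
  set B5 := c₅.coeff 5 with hB5
  have e3 : c₃ = C A0 + C A1 * X + C A2 * X ^ 2 + C A3 * X ^ 3 := by
    conv_lhs => rw [c₃.as_sum_range' 4 hn3]
    simp [Finset.sum_range_succ, ← C_mul_X_pow_eq_monomial]
    rfl
  have e5 : c₅ = C B0 + C B1 * X + C B2 * X ^ 2 + C B3 * X ^ 3 + C B4 * X ^ 4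
      + C B5 * X ^ 5 := by
    conv_lhs => rw [c₅.as_sum_range' 6 hn5]
    simp [Finset.sum_range_succ, ← C_mul_X_pow_eq_monomial]
    rfl
  have h3 : (3 : k[X]) = 0 := by
    exact_mod_cast CharP.cast_eq_zero k[X] 3
  set Q3 : k[X] :=
    (-(C ε₀) ^ 3 * C B2 + C ε₀ ^ 2 * (C A1 ^ 2 + 2 * C A0 * C A2) - C A1 ^ 3)
      + (-(C ε₀) ^ 3 * C B3 + C ε₀ ^ 2 * (2 * C A0 * C A3 + 2 * C A1 * C A2)) * X
      + (-(C ε₀) ^ 3 * C B4 + C ε₀ ^ 2 * (C A2 ^ 2 + 2 * C A1 * C A3)) * X ^ 2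
      + (-(C ε₀) ^ 3 * C B5 + 2 * C ε₀ ^ 2 * C A2 * C A3 - C A2 ^ 3) * X ^ 3 with hQ3
  set Q1 : k[X] :=
    (-(C ε₀) * C B0 + C A0 ^ 2) + (-(C ε₀) * C B1 + 2 * C A0 * C A1) * X with hQ1
  have hd3 : Q3.degree ≤ 3 := by rw [hQ3]; compute_degree
  have hd1 : Q1.degree ≤ 1 := by rw [hQ1]; compute_degree
  have heq : Δ = -C A3 ^ 3 * X ^ 12 + C A3 ^ 2 * C ε₀ ^ 2 * X ^ 10 + X ^ 6 * Q3
      + C ε₀ ^ 2 * X ^ 4 * Q1 - C A0 ^ 3 * X ^ 3 := by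
    rw [hQ3, hQ1]
    subst hΔ hb₂ hb₄ hb₆
    rw [e3, e5]
    linear_combination (-(X:k[X]) ^ 3 *
      ((C A0 * C A0 * C A1) * X ^ 1 + (C A0 * C A0 * C A2) * X ^ 2
      + (C A0 * C A1 * C A1) * X ^ 2 + (C A0 * C A0 * C A3) * X ^ 3
      + (2 * C A0 * C A1 * C A2) * X ^ 3 + (2 * C A0 * C A1 * C A3) * X ^ 4
      + (C A0 * C A2 * C A2) * X ^ 4 + (C A1 * C A1 * C A2) * X ^ 4
      + (2 * C A0 * C A2 * C A3) * X ^ 5 + (C A1 * C A1 * C A3) * X ^ 5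
      + (C A1 * C A2 * C A2) * X ^ 5 + (C A0 * C A3 * C A3) * X ^ 6
      + (2 * C A1 * C A2 * C A3) * X ^ 6 + (C A1 * C A3 * C A3) * X ^ 7
      + (C A2 * C A2 * C A3) * X ^ 7 + (C A2 * C A3 * C A3) * X ^ 8)) * h3
  refine ⟨A3, ε₀, A0, Q3, Q1, hd3, hd1, heq, ?_⟩
  rw [heq]
  have h11a : Q3.coeff 5 = 0 :=
    Polynomial.coeff_eq_zero_of_degree_lt (lt_of_le_of_lt hd3 (by norm_num))
  have h11b : Q1.coeff 7 = 0 :=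
    Polynomial.coeff_eq_zero_of_degree_lt (lt_of_le_of_lt hd1 (by norm_num))
  rw [show (X:k[X]) ^ 6 * Q3 = Q3 * X ^ 6 by ring,
    show (C ε₀ ^ 2 * X ^ 4 * Q1 : k[X]) = (C ε₀ ^ 2 * Q1) * X ^ 4 by ring,
    show (-C A3 ^ 3 * X ^ 12 : k[X]) = -(C A3 ^ 3 * X ^ 12) by ring]
  simp [Polynomial.coeff_mul_X_pow', h11a, h11b,
    show (C A3 ^ 2 * C ε₀ ^ 2 * X ^ 10 : k[X]) = (C A3 ^ 2 * C ε₀ ^ 2) * X ^ 10 by ring,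
    show (C A0 ^ 3 * X ^ 3 : k[X]) = (C A0 ^ 3) * X ^ 3 by ring]
  have f1 : ((C A3 : k[X]) ^ 2 * (C ε₀ : k[X]) ^ 2).coeff 1 = 0 := by
    rw [← Polynomial.C_pow, ← Polynomial.C_pow, ← Polynomial.C_mul,
      Polynomial.coeff_C]
    norm_num
  have f2 : ((C ε₀ : k[X]) ^ 2 * Q1).coeff 7 = 0 := by
    rw [← Polynomial.C_pow, Polynomial.coeff_C_mul, h11b, mul_zero]
  have f3 : ((C A0 : k[X]) ^ 3).coeff 8 = 0 := by
    rw [← Polynomial.C_pow, Polynomial.coeff_C]; norm_num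
  rw [f1, f2, f3]
  ring
end

section
/- Let k be a field of characteristic 3, let ε₁ ∈ k, let c₃ ∈ k[t] with deg c₃ ≤ 3 and c₅ ∈ k[t] with deg c₅ ≤ 5. Set b₂ = ε₁t², b₄ = −t·c₃, b₆ = t·c₅, and Δ = −b₂²(b₂b₆ − b₄²) + b₄³. Then there exist σ ∈ k and a polynomial P₆ ∈ k[t] with deg P₆ ≤ 6 such that Δ = t⁶·P₆ − σ³t³. In particular, the coefficients of t⁴ and t⁵ in Δ vanish. -/
/-! Write `c₃ = σ + t·q` with `σ = c₃(0)`. Then `b₄³ = -t³c₃³`, and in characteristic 3 the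
Frobenius gives `c₃³ = σ³ + t³q³`; the remaining part of `Δ` is divisible by `t⁶`. Hence
`Δ = t⁶(ε₁²c₃² - ε₁³tc₅ - q³) - σ³t³`. -/

open Polynomial

namespace Polynomial

theorem pow_char_eq_X_pow_mul_divX_pow_add {R : Type*} [CommRing R] (p : ℕ) [Fact p.Prime]
    [CharP R p] (f : R[X]) : f ^ p = X ^ p * f.divX ^ p + C (f.coeff 0) ^ p := by
  conv_lhs => rw [← X_mul_divX_add f]
  rw [add_pow_char, mul_pow]

theorem coeff_X_pow_mul_sub_C_mul_X_pow {R : Type*} [Ring R] (P : R[X]) (a : R) {m j n : ℕ}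
    (hnm : n < m) (hnj : n ≠ j) : (X ^ m * P - C a * X ^ j).coeff n = 0 := by
  rw [coeff_sub, coeff_X_pow_mul', coeff_C_mul_X_pow, if_neg hnm.not_ge, if_neg hnj, sub_zero]

theorem degree_C_sq_mul_sq_sub_C_pow_three_mul_X_mul_sub_divX_pow_le {R : Type*} [CommRing R]
    (e : R) {c₃ c₅ : R[X]} (hc₃ : c₃.degree ≤ 3) (hc₅ : c₅.degree ≤ 5) :
    (C e ^ 2 * c₃ ^ 2 - C e ^ 3 * X * c₅ - c₃.divX ^ 3).degree ≤ 6 := by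
  replace hc₃ : c₃.natDegree ≤ 3 := natDegree_le_iff_degree_le.mpr hc₃
  replace hc₅ : c₅.natDegree ≤ 5 := natDegree_le_iff_degree_le.mpr hc₅
  refine natDegree_le_iff_degree_le (n := 6) |>.mp ?_
  have hq : c₃.divX.natDegree ≤ 2 := by rw [natDegree_divX_eq_natDegree_tsub_one]; omega
  have hCe (n : ℕ) : (C e ^ n).natDegree ≤ 0 := by rw [← C_pow, natDegree_C]
  refine natDegree_sub_le_of_le (natDegree_sub_le_of_le
    (natDegree_mul_le_of_le (hCe 2) (natDegree_pow_le_of_le 2 hc₃))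
    (natDegree_mul_le_of_le (natDegree_mul_le_of_le (hCe 3) natDegree_X_le) hc₅))
    (natDegree_pow_le_of_le 3 hq) |>.trans ?_
  norm_num

end Polynomial

theorem stmt7 {k : Type*} [Field k] [CharP k 3]
    (ε₁ : k) (c₃ c₅ : k[X]) (hc₃ : c₃.degree ≤ 3) (hc₅ : c₅.degree ≤ 5)
    (b₂ b₄ b₆ Δ : k[X])
    (hb₂ : b₂ = C ε₁ * X ^ 2) (hb₄ : b₄ = -(X * c₃)) (hb₆ : b₆ = X * c₅)
    (hΔ : Δ = -b₂ ^ 2 * (b₂ * b₆ - b₄ ^ 2) + b₄ ^ 3) :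
    ∃ (σ : k) (P₆ : k[X]), P₆.degree ≤ 6 ∧
      Δ = X ^ 6 * P₆ - C σ ^ 3 * X ^ 3 ∧
      Δ.coeff 4 = 0 ∧ Δ.coeff 5 = 0 := by
  have : Fact (Nat.Prime 3) := ⟨Nat.prime_three⟩
  have hcube := pow_char_eq_X_pow_mul_divX_pow_add 3 c₃
  have hΔ' : Δ = X ^ 6 * (C ε₁ ^ 2 * c₃ ^ 2 - C ε₁ ^ 3 * X * c₅ - c₃.divX ^ 3)
      - C (c₃.coeff 0) ^ 3 * X ^ 3 := by
    subst hb₂ hb₄ hb₆ hΔ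
    linear_combination (-(X : k[X]) ^ 3) * hcube
  refine ⟨c₃.coeff 0, _, ?_, hΔ', ?_, ?_⟩
  · exact degree_C_sq_mul_sq_sub_C_pow_three_mul_X_mul_sub_divX_pow_le ε₁ hc₃ hc₅
  all_goals
    rw [hΔ', ← C_pow (a := c₃.coeff 0)]
    exact coeff_X_pow_mul_sub_C_mul_X_pow _ _ (by norm_num) (by norm_num)
end

section
/- Let k be a field of characteristic 3, let η, a, b, c, d ∈ k with η ≠ 0, a ≠ 0, b ≠ 0 and c ≠ d, and set Δ = η·t³(t−a)³(t−b)³(t−c)²(t−d) ∈ k[t]. Then the coefficient of t¹¹ in Δ equals η(c−d) and the coefficient of t⁵ in Δ equals η·a³b³(c−d); both are nonzero. Consequently, Δ is not equal to any polynomial of the form −α³t¹² + α²β²t¹⁰ + t⁶·P₃ + β²t⁴·P₁ − σ³t³ with α, β, σ ∈ k, deg P₃ ≤ 3, deg P₁ ≤ 1 (which has vanishing t¹¹-coefficient), nor to any polynomial of the form t⁶·P₆ + σ·t³ with σ ∈ k, deg P₆ ≤ 6 (which has vanishing t⁵-coefficient). (This shows the configuration X I₃ I₃ I₂ I₁, with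 X any additive fibre over t = 0, is impossible on a rational elliptic surface in characteristic 3, as are its specializations in which the I₂ and I₁ fibres remain distinct and neither I₃ fibre collides with X.) -/
/-!
In characteristic 3 the factors `(t - a)³` and `(t - b)³` become `t³ - a³` and `t³ - b³`, so
`Δ / η = t³ (t³ - a³) (t³ - b³) Q` with `Q = (t - c)² (t - d)` of degree 3. Reading off the
coefficients of `t¹¹` and `t⁵` therefore only involves the `t²`-coefficient of `Q`, which is
`-(2c + d) = c - d`. Both are nonzero, whereas the first normal form has no `t¹¹` term and the
second has no `t⁵` term.
-/

open Polynomial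

theorem Polynomial.X_sub_C_pow_char {R : Type*} [CommRing R] (p : ℕ) [Fact p.Prime] [CharP R p]
    (a : R) : (X - C a) ^ p = X ^ p - C (a ^ p) := by
  rw [sub_pow_char, C_pow]

section Coefficients

variable {R : Type*} [CommRing R]

theorem X_pow_three_mul_X_pow_three_sub_C_mul_X_pow_three_sub_C_mul (A B : R) (Q : R[X]) :
    X ^ 3 * (X ^ 3 - C A) * (X ^ 3 - C B) * Q
      = X ^ 9 * Q - C (A + B) * (X ^ 6 * Q) + C (A * B) * (X ^ 3 * Q) := by
  simp only [map_add, map_mul]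
  ring

theorem coeff_eleven_X_pow_three_mul_X_pow_three_sub_C_mul_X_pow_three_sub_C_mul (A B : R)
    {Q : R[X]} (hQ : Q.natDegree ≤ 3) :
    (X ^ 3 * (X ^ 3 - C A) * (X ^ 3 - C B) * Q).coeff 11 = Q.coeff 2 := by
  have h5 : Q.coeff 5 = 0 := coeff_eq_zero_of_natDegree_lt (by omega)
  have h8 : Q.coeff 8 = 0 := coeff_eq_zero_of_natDegree_lt (by omega)
  rw [X_pow_three_mul_X_pow_three_sub_C_mul_X_pow_three_sub_C_mul]
  simp only [coeff_add, coeff_sub, coeff_C_mul, coeff_X_pow_mul', h5, h8]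
  norm_num

theorem coeff_five_X_pow_three_mul_X_pow_three_sub_C_mul_X_pow_three_sub_C_mul (A B : R)
    (Q : R[X]) :
    (X ^ 3 * (X ^ 3 - C A) * (X ^ 3 - C B) * Q).coeff 5 = A * B * Q.coeff 2 := by
  rw [X_pow_three_mul_X_pow_three_sub_C_mul_X_pow_three_sub_C_mul]
  simp only [coeff_add, coeff_sub, coeff_C_mul, coeff_X_pow_mul']
  norm_num

theorem coeff_two_X_sub_C_sq_mul_X_sub_C [CharP R 3] (c d : R) :
    ((X - C c) ^ 2 * (X - C d)).coeff 2 = c - d := by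
  have h3 : (3 : R) = 0 := CharP.cast_eq_zero R 3
  have hQ : (X - C c) ^ 2 * (X - C d)
      = X ^ 3 - C (2 * c + d) * X ^ 2 + C (c ^ 2 + 2 * c * d) * X - C (c ^ 2 * d) := by
    simp only [map_add, map_mul, map_pow, map_ofNat]
    ring
  rw [hQ]
  simp only [coeff_add, coeff_sub, coeff_C_mul_X_pow, coeff_C_mul_X, coeff_X_pow, coeff_C]
  norm_num
  linear_combination (-c) * h3

theorem coeff_eleven_eq_zero_of_degree_le (α β σ : R) {P₃ P₁ : R[X]} (h₃ : P₃.degree ≤ 3)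
    (h₁ : P₁.degree ≤ 1) :
    (-C α ^ 3 * X ^ 12 + C α ^ 2 * C β ^ 2 * X ^ 10 + X ^ 6 * P₃
      + C β ^ 2 * X ^ 4 * P₁ - C σ ^ 3 * X ^ 3).coeff 11 = 0 := by
  have h5 : P₃.coeff 5 = 0 := coeff_eq_zero_of_degree_lt (h₃.trans_lt (by decide))
  have h7 : P₁.coeff 7 = 0 := coeff_eq_zero_of_degree_lt (h₁.trans_lt (by decide))
  simp only [← C_pow, ← C_mul, neg_mul, mul_assoc, coeff_add, coeff_sub, coeff_neg, coeff_C_mul,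
    coeff_X_pow_mul', coeff_X_pow, h5, h7]
  norm_num

theorem coeff_five_X_pow_six_mul_add_C_mul_X_pow_three (σ : R) (P : R[X]) :
    (X ^ 6 * P + C σ * X ^ 3).coeff 5 = 0 := by
  simp [coeff_X_pow_mul', coeff_X_pow]

end Coefficients

theorem stmt8 {k : Type*} [Field k] [CharP k 3]
    (η a b c d : k) (hη : η ≠ 0) (ha : a ≠ 0) (hb : b ≠ 0) (hcd : c ≠ d)
    (Δ : k[X])
    (hΔ : Δ = C η * (X ^ 3 * (X - C a) ^ 3 * (X - C b) ^ 3 * (X - C c) ^ 2 * (X - C d))) :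
    Δ.coeff 11 = η * (c - d) ∧ Δ.coeff 11 ≠ 0 ∧
    Δ.coeff 5 = η * (a ^ 3 * b ^ 3 * (c - d)) ∧ Δ.coeff 5 ≠ 0 ∧
    (∀ (α β σ : k) (P₃ P₁ : k[X]), P₃.degree ≤ 3 → P₁.degree ≤ 1 →
      Δ ≠ -C α ^ 3 * X ^ 12 + C α ^ 2 * C β ^ 2 * X ^ 10 + X ^ 6 * P₃
            + C β ^ 2 * X ^ 4 * P₁ - C σ ^ 3 * X ^ 3) ∧
    (∀ (σ : k) (P₆ : k[X]), P₆.degree ≤ 6 → Δ ≠ X ^ 6 * P₆ + C σ * X ^ 3) := by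
  have : Fact (Nat.Prime 3) := ⟨Nat.prime_three⟩
  have hΔ' : Δ = C η * (X ^ 3 * (X ^ 3 - C (a ^ 3)) * (X ^ 3 - C (b ^ 3))
      * ((X - C c) ^ 2 * (X - C d))) := by
    rw [hΔ, ← X_sub_C_pow_char 3 a, ← X_sub_C_pow_char 3 b]
    ring
  have hQ : ((X - C c) ^ 2 * (X - C d)).natDegree ≤ 3 := by compute_degree
  have h11 : Δ.coeff 11 = η * (c - d) := by
    rw [hΔ', coeff_C_mul, coeff_eleven_X_pow_three_mul_X_pow_three_sub_C_mul_X_pow_three_sub_C_mul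
      _ _ hQ, coeff_two_X_sub_C_sq_mul_X_sub_C]
  have h5 : Δ.coeff 5 = η * (a ^ 3 * b ^ 3 * (c - d)) := by
    rw [hΔ', coeff_C_mul, coeff_five_X_pow_three_mul_X_pow_three_sub_C_mul_X_pow_three_sub_C_mul,
      coeff_two_X_sub_C_sq_mul_X_sub_C]
  have h11ne : Δ.coeff 11 ≠ 0 := h11 ▸ mul_ne_zero hη (sub_ne_zero.mpr hcd)
  have h5ne : Δ.coeff 5 ≠ 0 :=
    h5 ▸ mul_ne_zero hη (mul_ne_zero (by positivity) (sub_ne_zero.mpr hcd))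
  refine ⟨h11, h11ne, h5, h5ne, ?_, ?_⟩
  · rintro α β σ P₃ P₁ h₃ h₁ rfl
    exact h11ne (coeff_eleven_eq_zero_of_degree_le α β σ h₃ h₁)
  · rintro σ P₆ - rfl
    exact h5ne (coeff_five_X_pow_six_mul_add_C_mul_X_pow_three σ P₆)
end

section
/- Let k be a field of characteristic 3, let ε₁, γ₀ ∈ k with ε₁ ≠ 0 and γ₀ ≠ 0, and let φ₁, φ₂, φ₃, γ₁, γ₂, γ₃, γ₄, γ₅ ∈ k. Set b₂ = ε₁t², b₄ = t²(φ₃t² + φ₂t + φ₁), b₆ = t(γ₅t⁵ + γ₄t⁴ + γ₃t³ + γ₂t² + γ₁t + γ₀), and Δ = −b₂²(b₂b₆ − b₄²) + b₄³. Then for all α, a, b ∈ k one has Δ ≠ α·t⁶(t−a)³(t−b)³. (This shows the configurations II I₃ I₃ and II I₆, with the type II fibre of Lang's case 1C over t = 0, do not exist on a rational elliptic surface in characteristic 3.) -/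
/-!
Writing b₄ = t²q and b₆ = t r, one has Δ = t⁶ (q³ + t (-ε₁³ r + t ε₁² q²)), while the
right-hand side is α t⁶ ((t - a)(t - b))³. A cube in characteristic 3 is
a polynomial in t³, so comparing coefficients of t⁷ gives -ε₁³ γ₀ = 0.
-/

open Polynomial

section

variable {R : Type*} [CommRing R]

theorem Polynomial.coeff_pow_expChar_eq_zero {p : ℕ} [ExpChar R p] (f : R[X]) {n : ℕ}
    (hn : ¬ p ∣ n) : (f ^ p).coeff n = 0 := by
  rw [← map_frobenius_expand, coeff_map, coeff_expand (expChar_pos R p), if_neg hn, map_zero]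

variable [ExpChar R 3]

theorem coeff_seven_discriminant (ε : R) (q r : R[X]) :
    (-(C ε * X ^ 2) ^ 2 * (C ε * X ^ 2 * (X * r) - (X ^ 2 * q) ^ 2) + (X ^ 2 * q) ^ 3).coeff 7
      = -ε ^ 3 * r.coeff 0 := by
  have hΔ : -(C ε * X ^ 2) ^ 2 * (C ε * X ^ 2 * (X * r) - (X ^ 2 * q) ^ 2) + (X ^ 2 * q) ^ 3
      = X ^ 6 * (X * (C (-ε ^ 3) * r + X * (C ε * q) ^ 2) + q ^ 3) := by
    simp only [C_neg, C_pow]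
    ring
  rw [hΔ, show 7 = 1 + 6 from rfl, coeff_X_pow_mul, coeff_add,
    coeff_pow_expChar_eq_zero q (by norm_num), add_zero, show 1 = 0 + 1 from rfl, coeff_X_mul,
    coeff_add, coeff_C_mul, coeff_X_mul_zero, add_zero]

theorem coeff_seven_C_mul_X_pow_six_mul_cube (α : R) (g : R[X]) :
    (C α * (X ^ 6 * g ^ 3)).coeff 7 = 0 := by
  rw [coeff_C_mul, show 7 = 1 + 6 from rfl, coeff_X_pow_mul,
    coeff_pow_expChar_eq_zero g (by norm_num), mul_zero]

end

theorem stmt9 {k : Type*} [Field k] [CharP k 3]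
    (ε₁ γ₀ : k) (hε₁ : ε₁ ≠ 0) (hγ₀ : γ₀ ≠ 0)
    (φ₁ φ₂ φ₃ γ₁ γ₂ γ₃ γ₄ γ₅ : k)
    (b₂ b₄ b₆ Δ : k[X])
    (hb₂ : b₂ = C ε₁ * X ^ 2)
    (hb₄ : b₄ = X ^ 2 * (C φ₃ * X ^ 2 + C φ₂ * X + C φ₁))
    (hb₆ : b₆ = X * (C γ₅ * X ^ 5 + C γ₄ * X ^ 4 + C γ₃ * X ^ 3 + C γ₂ * X ^ 2
              + C γ₁ * X + C γ₀))
    (hΔ : Δ = -b₂ ^ 2 * (b₂ * b₆ - b₄ ^ 2) + b₄ ^ 3) :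
    ∀ α a b : k, Δ ≠ C α * (X ^ 6 * (X - C a) ^ 3 * (X - C b) ^ 3) := by
  intro α a b h
  subst hb₂ hb₄ hb₆ hΔ
  rw [mul_assoc (X ^ 6), ← mul_pow] at h
  have h7 := congrArg (coeff · 7) h
  simp only [coeff_seven_discriminant, coeff_seven_C_mul_X_pow_six_mul_cube] at h7
  simp [hε₁, hγ₀] at h7
end

section
/- Let k be a field of characteristic 3, let ε₁ ∈ k with ε₁ ≠ 0, let φ₁ ∈ k with φ₁ ≠ 0, and let φ₂, φ₃, γ₁, γ₂, γ₃, γ₄, γ₅ ∈ k. Set b₂ = ε₁t², b₄ = t²(φ₃t² + φ₂t + φ₁), b₆ = t²(γ₅t⁴ + γ₄t³ + γ₃t² + γ₂t + γ₁), and Δ = −b₂²(b₂b₆ − b₄²) + b₄³. Then for all α ∈ k and all a ∈ k with a ≠ 0 one has Δ ≠ α·t⁶(t−a)³(t−1)²(t+1). (This shows the configurations IV I₃ I₂ I₁ and IV I₅ I₁, with the type IV fibre of Lang's case 3C over t = 0 and the I₂ and I₁ fibres normalized to 1 and −1, do not exist on a rational elliptic surface in characteristic 3.) -/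
/-!
Factor `Δ = t⁶ (f³ + t² ε₁² (f² - ε₁ g))`, where `b₄ = t² f` and `b₆ = t² g`. In characteristic 3
the cube `f³` is a polynomial in `t³`, so `Δ / t⁶` has no linear term. On the other side
`(t - a)³ = t³ - a³`, so the linear coefficient of `α (t - a)³ (t - 1)² (t + 1)` is `α a³`.
Hence `α = 0`, and comparing constant terms gives `φ₁³ = 0`.
-/

open Polynomial

namespace Polynomial

variable {R : Type*}

theorem coeff_pow_expChar_eq_zero_s11 [CommSemiring R] (p : ℕ) [ExpChar R p] (f : R[X]) {n : ℕ}
    (hn : ¬ p ∣ n) : (f ^ p).coeff n = 0 := by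
  rw [← map_frobenius_expand, coeff_map, coeff_expand (expChar_pos R p), if_neg hn, map_zero]

variable [CommRing R] (p : ℕ) [ExpChar R p]

theorem coeff_one_pow_expChar_add_X_sq_mul (hp : p ≠ 1) (f r : R[X]) :
    (f ^ p + X ^ 2 * r).coeff 1 = 0 := by
  rw [coeff_add, coeff_pow_expChar_eq_zero_s11 p f (by rwa [Nat.dvd_one]), coeff_X_pow_mul',
    if_neg (by norm_num), add_zero]

theorem coeff_one_X_sub_C_pow_expChar_mul (hp : p ≠ 1) (a : R) (q : R[X]) :
    ((X - C a) ^ p * q).coeff 1 = -a ^ p * q.coeff 1 := by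
  rw [mul_coeff_one, sub_pow_expChar, coeff_sub, coeff_sub, coeff_X_pow, coeff_X_pow,
    if_neg (expChar_pos R p).ne, if_neg (Ne.symm hp), ← C_pow, coeff_C_zero, coeff_C_succ]
  ring

end Polynomial

theorem disc_eq_X_pow_six_mul {R : Type*} [CommRing R] (ε : R) (f g : R[X]) :
    -(C ε * X ^ 2) ^ 2 * (C ε * X ^ 2 * (X ^ 2 * g) - (X ^ 2 * f) ^ 2) + (X ^ 2 * f) ^ 3
      = X ^ 6 * (f ^ 3 + X ^ 2 * (C ε ^ 2 * (f ^ 2 - C ε * g))) := by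
  ring

theorem stmt11_general {k : Type*} [Field k] [CharP k 3]
    (ε₁ : k) (φ₁ : k) (hφ₁ : φ₁ ≠ 0)
    (φ₂ φ₃ γ₁ γ₂ γ₃ γ₄ γ₅ : k)
    (b₂ b₄ b₆ Δ : k[X])
    (hb₂ : b₂ = C ε₁ * X ^ 2)
    (hb₄ : b₄ = X ^ 2 * (C φ₃ * X ^ 2 + C φ₂ * X + C φ₁))
    (hb₆ : b₆ = X ^ 2 * (C γ₅ * X ^ 4 + C γ₄ * X ^ 3 + C γ₃ * X ^ 2 + C γ₂ * X + C γ₁))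
    (hΔ : Δ = -b₂ ^ 2 * (b₂ * b₆ - b₄ ^ 2) + b₄ ^ 3) :
    ∀ α a : k, a ≠ 0 →
      Δ ≠ C α * (X ^ 6 * (X - C a) ^ 3 * (X - 1) ^ 2 * (X + 1)) := by
  intro α a ha h
  subst hb₂ hb₄ hb₆ hΔ
  rw [disc_eq_X_pow_six_mul, mul_assoc, mul_assoc, mul_left_comm (C α)] at h
  have h' := mul_left_cancel₀ (pow_ne_zero 6 X_ne_zero) h
  have hq : ((X - 1) ^ 2 * (X + 1) : k[X]).coeff 1 = -1 := by
    simp [mul_coeff_one, sq, coeff_X, coeff_one]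
  have hα : α = 0 := by
    have h1 := congrArg (coeff · 1) h'
    rw [coeff_one_pow_expChar_add_X_sq_mul 3 (by norm_num), coeff_C_mul,
      coeff_one_X_sub_C_pow_expChar_mul 3 (by norm_num), hq] at h1
    simpa [ha] using h1.symm
  have h0 := congrArg (coeff · 0) h'
  simp [hα, coeff_zero_eq_eval_zero, hφ₁] at h0

theorem stmt11 {k : Type*} [Field k] [CharP k 3]
    (ε₁ : k) (hε₁ : ε₁ ≠ 0) (φ₁ : k) (hφ₁ : φ₁ ≠ 0)
    (φ₂ φ₃ γ₁ γ₂ γ₃ γ₄ γ₅ : k)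
    (b₂ b₄ b₆ Δ : k[X])
    (hb₂ : b₂ = C ε₁ * X ^ 2)
    (hb₄ : b₄ = X ^ 2 * (C φ₃ * X ^ 2 + C φ₂ * X + C φ₁))
    (hb₆ : b₆ = X ^ 2 * (C γ₅ * X ^ 4 + C γ₄ * X ^ 3 + C γ₃ * X ^ 2 + C γ₂ * X + C γ₁))
    (hΔ : Δ = -b₂ ^ 2 * (b₂ * b₆ - b₄ ^ 2) + b₄ ^ 3) :
    ∀ α a : k, a ≠ 0 →
      Δ ≠ C α * (X ^ 6 * (X - C a) ^ 3 * (X - 1) ^ 2 * (X + 1)) :=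
  stmt11_general ε₁ φ₁ hφ₁ φ₂ φ₃ γ₁ γ₂ γ₃ γ₄ γ₅ b₂ b₄ b₆ Δ hb₂ hb₄ hb₆ hΔ
end

section
/- Let k be a field of characteristic 3, let ε₀, φ₀ ∈ k with ε₀ ≠ 0 and φ₀ ≠ 0, and let φ₁, φ₂, φ₃, γ₁, γ₂, γ₃, γ₄, γ₅ ∈ k. Set b₂ = ε₀t, b₄ = t(φ₃t³ + φ₂t² + φ₁t + φ₀), b₆ = t(γ₅t⁵ + γ₄t⁴ + γ₃t³ + γ₂t² + γ₁t), and Δ = −b₂²(b₂b₆ − b₄²) + b₄³. Then for all α ∈ k with α ≠ 0 and all a, b, c ∈ k with a ≠ 0, b ≠ 0 and a ≠ b, one has Δ ≠ α·t³(t−a)⁴(t−b)⁴(t−c). (This shows the configurations III I₄ I₄ I₁ and III I₅ I₄, with the type III fibre over t = 0 and b₂ having distinct roots, do not exist on a rational elliptic surface in characteristic 3.) -/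
/-!
Writing b₄ = t f and b₆ = t² h, the discriminant is Δ = t³ F with
F = f³ + ε₀² t f² − ε₀³ t² h, so the identity becomes F = α (t − a)⁴ (t − b)⁴ (t − c).
In characteristic 3 cubing is additive, so f³, (t − a)³ and (t − b)³ only have terms of degree
divisible by 3; this makes the coefficients of both sides at t⁹, t⁸, t⁷, t, 1 short expressions (h, of degree ≤ 4, does not
reach them). Comparing them gives a + b + c = 0, φ₀² = (ab)³ φ₃² and φ₀ = −φ₃ ab c; hence
c² = ab, so ab + bc + ca = ab − c² = 0, and then the t⁷ coefficient says ε₀² φ₃² = 0.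
-/

open Polynomial

section CharThree

variable {R : Type*} [CommRing R] [CharP R 3]

theorem X_sub_C_pow_three (a : R) : (X - C a) ^ 3 = X ^ 3 - C (a ^ 3) := by
  rw [sub_pow_char, C_pow]

theorem cubic_pow_three (φ₀ φ₁ φ₂ φ₃ : R) :
    (C φ₃ * X ^ 3 + C φ₂ * X ^ 2 + C φ₁ * X + C φ₀) ^ 3 =
      C (φ₃ ^ 3) * X ^ 9 + C (φ₂ ^ 3) * X ^ 6 + C (φ₁ ^ 3) * X ^ 3 + C (φ₀ ^ 3) := by
  simp only [add_pow_char, mul_pow, ← pow_mul, C_pow]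

theorem coeffs_X_sub_C_pow_four_mul_X_sub_C_pow_four_mul_X_sub_C (a b c : R) :
    let G := (X - C a) ^ 4 * (X - C b) ^ 4 * (X - C c)
    G.coeff 9 = 1 ∧ G.coeff 8 = -(a + b + c) ∧ G.coeff 7 = a * b + b * c + c * a ∧
      G.coeff 1 = (a * b) ^ 3 * (a * b + b * c + c * a) ∧
      G.coeff 0 = -((a * b) ^ 3 * (a * b * c)) := by
  intro G
  have hG : G = (X ^ 3 - C (a ^ 3)) * (X ^ 3 - C (b ^ 3)) * ((X - C a) * (X - C b) * (X - C c)) := by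
    simp only [G, ← X_sub_C_pow_three]
    ring
  rw [hG]
  ring_nf
  simp only [coeff_add, coeff_sub, ← C_mul, coeff_mul_C, coeff_X_pow, coeff_X, coeff_C]
  refine ⟨?_, ?_, ?_, ?_, ?_⟩ <;> norm_num <;> ring

theorem coeffs_reduced_discriminant (ε φ₀ φ₁ φ₂ φ₃ : R) (h : R[X]) (hh : h.natDegree ≤ 4) :
    let f := C φ₃ * X ^ 3 + C φ₂ * X ^ 2 + C φ₁ * X + C φ₀
    let F := f ^ 3 + C ε ^ 2 * X * f ^ 2 - C ε ^ 3 * X ^ 2 * h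
    F.coeff 9 = φ₃ ^ 3 ∧ F.coeff 8 = 0 ∧ F.coeff 7 = ε ^ 2 * φ₃ ^ 2 ∧
      F.coeff 1 = ε ^ 2 * φ₀ ^ 2 ∧ F.coeff 0 = φ₀ ^ 3 := by
  intro f F
  have hlow : ∀ n < 2, (C ε ^ 3 * X ^ 2 * h).coeff n = 0 := fun n hn => by
    rw [mul_assoc, ← C_pow, coeff_C_mul, coeff_X_pow_mul', if_neg (by omega), mul_zero]
  have hhigh : ∀ n > 6, (C ε ^ 3 * X ^ 2 * h).coeff n = 0 := fun n hn => by
    refine coeff_eq_zero_of_natDegree_lt (lt_of_le_of_lt ?_ hn)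
    rw [mul_assoc, ← C_pow]
    exact natDegree_C_mul_le _ _ |>.trans
      (natDegree_mul_le.trans (add_le_add (natDegree_X_pow_le 2) hh))
  simp only [F, coeff_sub, hlow 0 (by norm_num), hlow 1 (by norm_num), hhigh 7 (by norm_num),
    hhigh 8 (by norm_num), hhigh 9 (by norm_num), sub_zero, f, cubic_pow_three]
  ring_nf
  simp only [coeff_add, ← C_pow, coeff_C_mul, coeff_mul_C, coeff_mul_ofNat, coeff_X_pow,
    coeff_X, coeff_C]
  refine ⟨?_, ?_, ?_, ?_, ?_⟩ <;> norm_num <;> ring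

end CharThree

theorem false_of_coeff_eqs {K : Type*} [Field K] {ε φ₀ φ₃ α a b c : K}
    (hε : ε ≠ 0) (hφ₀ : φ₀ ≠ 0) (hα : α ≠ 0)
    (h9 : φ₃ ^ 3 = α * 1) (h8 : 0 = α * -(a + b + c))
    (h7 : ε ^ 2 * φ₃ ^ 2 = α * (a * b + b * c + c * a))
    (h1 : ε ^ 2 * φ₀ ^ 2 = α * ((a * b) ^ 3 * (a * b + b * c + c * a)))
    (h0 : φ₀ ^ 3 = α * -((a * b) ^ 3 * (a * b * c))) : False := by
  rw [mul_one] at h9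
  subst h9
  have hφ₃ : φ₃ ≠ 0 := by rintro rfl; simp at hα
  have hc : c = -(a + b) := by
    linear_combination -(mul_eq_zero.mp h8.symm).resolve_left hα
  have hφ₀_sq : φ₀ ^ 2 = (a * b) ^ 3 * φ₃ ^ 2 :=
    mul_left_cancel₀ (pow_ne_zero 2 hε) (by linear_combination h1 - (a * b) ^ 3 * h7)
  have hab : a * b ≠ 0 := by
    rintro hab
    exact hφ₀ (pow_eq_zero_iff two_ne_zero |>.mp (by rw [hφ₀_sq, hab]; ring))
  have hφ₀_eq : φ₀ = -(φ₃ * (a * b) * c) :=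
    mul_right_cancel₀ (mul_ne_zero (pow_ne_zero 3 hab) (pow_ne_zero 2 hφ₃))
      (by linear_combination h0 - φ₀ * hφ₀_sq)
  have hc_sq : c ^ 2 = a * b :=
    mul_left_cancel₀ (mul_ne_zero (pow_ne_zero 2 hab) (pow_ne_zero 2 hφ₃))
      (by linear_combination hφ₀_sq - (φ₀ - φ₃ * (a * b) * c) * hφ₀_eq)
  have hs : a * b + b * c + c * a = 0 := by linear_combination c * hc - hc_sq
  rw [hs, mul_zero] at h7
  exact mul_ne_zero (pow_ne_zero 2 hε) (pow_ne_zero 2 hφ₃) h7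

theorem stmt12 {k : Type*} [Field k] [CharP k 3]
    (ε₀ : k) (hε₀ : ε₀ ≠ 0) (φ₀ : k) (hφ₀ : φ₀ ≠ 0)
    (φ₁ φ₂ φ₃ γ₁ γ₂ γ₃ γ₄ γ₅ : k)
    (b₂ b₄ b₆ Δ : k[X])
    (hb₂ : b₂ = C ε₀ * X)
    (hb₄ : b₄ = X * (C φ₃ * X ^ 3 + C φ₂ * X ^ 2 + C φ₁ * X + C φ₀))
    (hb₆ : b₆ = X * (C γ₅ * X ^ 5 + C γ₄ * X ^ 4 + C γ₃ * X ^ 3 + C γ₂ * X ^ 2 + C γ₁ * X))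
    (hΔ : Δ = -b₂ ^ 2 * (b₂ * b₆ - b₄ ^ 2) + b₄ ^ 3) :
    ∀ α a b c : k, α ≠ 0 → a ≠ 0 → b ≠ 0 → a ≠ b →
      Δ ≠ C α * (X ^ 3 * (X - C a) ^ 4 * (X - C b) ^ 4 * (X - C c)) := by
  subst hb₂ hb₄ hb₆ hΔ
  intro α a b c hα _ _ _ hΔ
  set f := C φ₃ * X ^ 3 + C φ₂ * X ^ 2 + C φ₁ * X + C φ₀
  set g := C γ₅ * X ^ 4 + C γ₄ * X ^ 3 + C γ₃ * X ^ 2 + C γ₂ * X + C γ₁ with hg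
  have hF : f ^ 3 + C ε₀ ^ 2 * X * f ^ 2 - C ε₀ ^ 3 * X ^ 2 * g =
      C α * ((X - C a) ^ 4 * (X - C b) ^ 4 * (X - C c)) := by
    refine mul_left_cancel₀ (pow_ne_zero 3 X_ne_zero) ?_
    linear_combination hΔ
  have hcoeff (n : ℕ) := congrArg (coeff · n) hF
  simp only [coeff_C_mul] at hcoeff
  obtain ⟨F9, F8, F7, F1, F0⟩ :=
    coeffs_reduced_discriminant ε₀ φ₀ φ₁ φ₂ φ₃ g (by rw [hg]; compute_degree!)
  obtain ⟨G9, G8, G7, G1, G0⟩ := coeffs_X_sub_C_pow_four_mul_X_sub_C_pow_four_mul_X_sub_C a b c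
  exact false_of_coeff_eqs hε₀ hφ₀ hα (by rw [← F9, ← G9]; exact hcoeff 9)
    (by rw [← F8, ← G8]; exact hcoeff 8) (by rw [← F7, ← G7]; exact hcoeff 7)
    (by rw [← F1, ← G1]; exact hcoeff 1) (by rw [← F0, ← G0]; exact hcoeff 0)
end

section
/- Let k be an algebraically closed field of characteristic 3. There exist polynomials b₄, b₆ ∈ k[t] with deg b₄ ≤ 4 and deg b₆ ≤ 6 such that, with b₂ = t, the discriminant Δ = −b₂²(b₂b₆ − b₄²) + b₄³ equals t¹² + t¹⁰ + t² + 1 = (t² + 1)²(t⁸ − t⁶ + t⁴ − t² + 1) = (t² + 1)(t¹⁰ + 1). Moreover this polynomial has exactly ten distinct roots in k, all nonzero and distinct from the roots of b₂: the two square roots of −1, each with multiplicity 2, and eight simple roots. (This realizes the configuration I₂² I₁⁸ of multiplicative fibres on a rational elliptic surface in characteristic 3.) -/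
/-!
Write `D = (X² + 1)(X¹⁰ + 1)`. In characteristic 3 both factors are separable (their degrees
`2` and `10` are prime to 3), and `X² + 1` divides `X¹⁰ + 1`. Hence the roots of `D` are the
ten roots of `X¹⁰ + 1`: the two square roots of `-1` occur in both factors and are double roots
of `D`, the remaining eight are simple.

The Weierstrass data are `b₄ = t⁴ + 1`, `b₆ = -t³`, whose discriminant is
`D + 3(t⁸ + t⁶ + t⁴)`.
-/

open Polynomial

namespace Polynomial

variable {K : Type*} [Field K]

theorem separable_X_pow_add_one (p : ℕ) [CharP K p] {n : ℕ} (hn : ¬p ∣ n) :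
    (X ^ n + 1 : K[X]).Separable := by
  simpa [sub_eq_add_neg] using separable_X_pow_sub_C' p n (-1 : K) hn (neg_ne_zero.2 one_ne_zero)

theorem rootMultiplicity_eq_one_of_separable {p : K[X]} (hp : p.Separable) {x : K}
    (hx : p.IsRoot x) : p.rootMultiplicity x = 1 :=
  le_antisymm (rootMultiplicity_le_one_of_separable hp x) ((rootMultiplicity_pos hp.ne_zero).2 hx)

theorem rootMultiplicity_mul_of_not_isRoot_left {p q : K[X]} (hq : q.Separable)
    (hp : p.Separable) {x : K} (hx : (q * p).IsRoot x) (hqx : ¬q.IsRoot x) :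
    (q * p).rootMultiplicity x = 1 := by
  have hpx : p.IsRoot x := (mul_eq_zero.1 (eval_mul (p := q) ▸ hx)).resolve_left hqx
  rw [rootMultiplicity_mul (mul_ne_zero hq.ne_zero hp.ne_zero), rootMultiplicity_eq_zero hqx,
    rootMultiplicity_eq_one_of_separable hp hpx]

theorem rootMultiplicity_mul_of_dvd_of_isRoot {p q : K[X]} (hqp : q ∣ p) (hq : q.Separable)
    (hp : p.Separable) {x : K} (hx : q.IsRoot x) : (q * p).rootMultiplicity x = 2 := by
  rw [rootMultiplicity_mul (mul_ne_zero hq.ne_zero hp.ne_zero),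
    rootMultiplicity_eq_one_of_separable hq hx,
    rootMultiplicity_eq_one_of_separable hp (hx.dvd hqp)]

variable [DecidableEq K]

theorem card_roots_toFinset_of_separable [IsAlgClosed K] {p : K[X]} (hp : p.Separable) :
    p.roots.toFinset.card = p.natDegree := by
  rw [Multiset.toFinset_card_of_nodup (nodup_roots hp),
    (IsAlgClosed.splits p).natDegree_eq_card_roots]

theorem roots_toFinset_mul_of_dvd {p q : K[X]} (hqp : q ∣ p) (hp : p ≠ 0) :
    (q * p).roots.toFinset = p.roots.toFinset := by
  ext x
  simp only [Multiset.mem_toFinset, mem_roots (mul_ne_zero (ne_zero_of_dvd_ne_zero hp hqp) hp),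
    mem_roots hp, IsRoot.def, eval_mul, mul_eq_zero, or_iff_right_iff_imp]
  exact fun hqx => IsRoot.dvd hqx hqp

theorem filter_rootMultiplicity_mul_of_dvd_eq_one {p q : K[X]} (hqp : q ∣ p)
    (hq : q.Separable) (hp : p.Separable) :
    ((q * p).roots.toFinset.filter fun x => (q * p).rootMultiplicity x = 1) =
      p.roots.toFinset \ q.roots.toFinset := by
  ext x
  rw [Finset.mem_filter, roots_toFinset_mul_of_dvd hqp hp.ne_zero, Finset.mem_sdiff]
  refine and_congr_right fun hpx => ?_
  rw [Multiset.mem_toFinset, mem_roots hq.ne_zero]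
  by_cases hqx : q.IsRoot x
  · exact iff_of_false (by rw [rootMultiplicity_mul_of_dvd_of_isRoot hqp hq hp hqx]; norm_num)
      (not_not.2 hqx)
  · have hx : (q * p).IsRoot x :=
      ((mem_roots hp.ne_zero).1 (Multiset.mem_toFinset.1 hpx)).dvd (dvd_mul_left p q)
    exact iff_of_true (rootMultiplicity_mul_of_not_isRoot_left hq hp hx hqx) hqx

theorem card_filter_rootMultiplicity_mul_of_dvd_eq_one [IsAlgClosed K] {p q : K[X]}
    (hqp : q ∣ p) (hq : q.Separable) (hp : p.Separable) :
    ((q * p).roots.toFinset.filter fun x => (q * p).rootMultiplicity x = 1).card =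
      p.natDegree - q.natDegree := by
  have hsub : q.roots.toFinset ⊆ p.roots.toFinset :=
    Multiset.toFinset_subset.2 (Multiset.subset_of_le (roots.le_of_dvd hp.ne_zero hqp))
  rw [filter_rootMultiplicity_mul_of_dvd_eq_one hqp hq hp, Finset.card_sdiff_of_subset hsub,
    card_roots_toFinset_of_separable hp, card_roots_toFinset_of_separable hq]

end Polynomial

theorem stmt14 {k : Type*} [Field k] [IsAlgClosed k] [CharP k 3] [DecidableEq k]
    (D : k[X]) (hD : D = X ^ 12 + X ^ 10 + X ^ 2 + 1) :
    (∃ b₄ b₆ : k[X], b₄.degree ≤ 4 ∧ b₆.degree ≤ 6 ∧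
      -(X : k[X]) ^ 2 * (X * b₆ - b₄ ^ 2) + b₄ ^ 3 = D) ∧
    D = (X ^ 2 + 1) ^ 2 * (X ^ 8 - X ^ 6 + X ^ 4 - X ^ 2 + 1) ∧
    D = (X ^ 2 + 1) * (X ^ 10 + 1) ∧
    D.roots.toFinset.card = 10 ∧
    (∀ x : k, D.eval x = 0 → x ≠ 0) ∧
    (∀ x : k, x ^ 2 = -1 → D.rootMultiplicity x = 2) ∧
    (∀ x : k, D.eval x = 0 → x ^ 2 ≠ -1 → D.rootMultiplicity x = 1) ∧
    (D.roots.toFinset.filter fun x => D.rootMultiplicity x = 1).card = 8 := by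
  have hdvd : (X ^ 2 + 1 : k[X]) ∣ X ^ 10 + 1 := ⟨X ^ 8 - X ^ 6 + X ^ 4 - X ^ 2 + 1, by ring⟩
  have hQ : (X ^ 2 + 1 : k[X]).Separable := separable_X_pow_add_one 3 (by norm_num)
  have hP : (X ^ 10 + 1 : k[X]).Separable := separable_X_pow_add_one 3 (by norm_num)
  have hroot : ∀ x : k, (X ^ 2 + 1 : k[X]).IsRoot x ↔ x ^ 2 = -1 := by
    simp [eq_neg_iff_add_eq_zero]
  have hDQP : D = (X ^ 2 + 1) * (X ^ 10 + 1) := by rw [hD]; ring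
  have h3 : (3 : k[X]) = 0 := CharP.cast_eq_zero k[X] 3
  refine ⟨⟨X ^ 4 + 1, -X ^ 3, by compute_degree!, by compute_degree!, ?_⟩, by rw [hD]; ring,
    hDQP, ?_, ?_, ?_, ?_, ?_⟩
  · rw [hD]; linear_combination (X ^ 8 + X ^ 6 + X ^ 4 : k[X]) * h3
  · rw [hDQP, roots_toFinset_mul_of_dvd hdvd hP.ne_zero, card_roots_toFinset_of_separable hP,
      ← C_1, natDegree_X_pow_add_C]
  · rintro x hx rfl
    simp [hD] at hx
  · intro x hx
    rw [hDQP]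
    exact rootMultiplicity_mul_of_dvd_of_isRoot hdvd hQ hP ((hroot x).2 hx)
  · intro x hx hx2
    rw [hDQP] at hx ⊢
    exact rootMultiplicity_mul_of_not_isRoot_left hQ hP hx (mt (hroot x).1 hx2)
  · rw [hDQP, card_filter_rootMultiplicity_mul_of_dvd_eq_one hdvd hQ hP,
      ← C_1, natDegree_X_pow_add_C, natDegree_X_pow_add_C]
end

section
/- Let k be an algebraically closed field of characteristic 3. There exist polynomials b₄, b₆ ∈ k[t] with deg b₄ ≤ 4 and deg b₆ ≤ 6 such that, with b₂ = t, the discriminant Δ = −b₂²(b₂b₆ − b₄²) + b₄³ equals t¹² + t¹⁰ − t⁶ + t² + 1 = ((t² − 1)(t⁴ + 1))². Moreover (t² − 1)(t⁴ + 1) is a separable polynomial of degree 6 with nonzero constant term, so Δ has exactly six distinct roots in k, each of multiplicity 2, all nonzero. (This realizes the configuration I₂⁶ of multiplicative fibres on a rational elliptic surface in characteristic 3; this configuration exists in characteristic 3 but not in characteristic 2.) -/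
open Polynomial

theorem stmt15 {k : Type*} [Field k] [IsAlgClosed k] [CharP k 3] [DecidableEq k]
    (D : k[X]) (hD : D = X ^ 12 + X ^ 10 - X ^ 6 + X ^ 2 + 1) :
    (∃ b₄ b₆ : k[X], b₄.degree ≤ 4 ∧ b₆.degree ≤ 6 ∧
      -(X : k[X]) ^ 2 * (X * b₆ - b₄ ^ 2) + b₄ ^ 3 = D) ∧
    D = ((X ^ 2 - 1) * (X ^ 4 + 1)) ^ 2 ∧
    ((X ^ 2 - 1) * (X ^ 4 + 1) : k[X]).Separable ∧
    ((X ^ 2 - 1) * (X ^ 4 + 1) : k[X]).natDegree = 6 ∧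
    ((X ^ 2 - 1) * (X ^ 4 + 1) : k[X]).coeff 0 ≠ 0 ∧
    D.roots.toFinset.card = 6 ∧
    (∀ x : k, D.eval x = 0 → x ≠ 0 ∧ D.rootMultiplicity x = 2) := by
  have h3 : (3 : k[X]) = 0 := by
    have := CharP.cast_eq_zero k[X] 3
    simpa using this
  set f : k[X] := (X ^ 2 - 1) * (X ^ 4 + 1) with hf
  have hfeq : f = X ^ 6 - X ^ 4 + X ^ 2 - 1 := by rw [hf]; ring
  have hDf : D = f ^ 2 := by
    rw [hD, hfeq]
    linear_combination (X ^ 10 - X ^ 8 + X ^ 6 - X ^ 4 + X ^ 2 : k[X]) * h3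
  have hder : derivative f = -(X ^ 3 + X) := by
    rw [hfeq]
    simp only [derivative_sub, derivative_add, derivative_X_pow, derivative_one,
      Polynomial.C_eq_natCast]
    push_cast
    linear_combination (2 * X ^ 5 - X ^ 3 + X : k[X]) * h3
  have hsep : f.Separable := by
    refine ⟨-1, -(X ^ 3 + X), ?_⟩
    rw [hder, hfeq]
    linear_combination (X ^ 4 : k[X]) * h3
  have hdeg : f.natDegree = 6 := by
    rw [hfeq]
    compute_degree!
  have hfne : f ≠ 0 := fun h => by simp [h] at hdeg
  have hcard : Multiset.card f.roots = 6 := by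
    have hsplit : f.Splits := IsAlgClosed.splits f
    have := hsplit.natDegree_eq_card_roots
    rw [hdeg] at this
    exact this.symm
  refine ⟨⟨X ^ 4 - X ^ 2 + 1, X ^ 5 + X, ?_, ?_, ?_⟩, hDf, hsep, hdeg, ?_, ?_, ?_⟩
  · compute_degree
  · compute_degree
    norm_num
  · rw [hD]
    linear_combination -(X ^ 10 - X ^ 8 + X ^ 6 - X ^ 4 + X ^ 2 : k[X]) * h3
  · rw [hfeq]; simp
  · rw [hDf, sq, roots_mul (mul_ne_zero hfne hfne)]
    rw [Multiset.toFinset_add, Finset.union_self,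
      Multiset.toFinset_card_of_nodup (nodup_roots hsep), hcard]
  · intro x hx
    have hx0 : f.eval x = 0 := by
      have : (f.eval x) ^ 2 = 0 := by rw [← eval_pow, ← hDf, hx]
      exact pow_eq_zero_iff (two_ne_zero) |>.mp this
    have hxne : x ≠ 0 := by
      rintro rfl
      rw [hfeq] at hx0
      simp at hx0
    refine ⟨hxne, ?_⟩
    have hmem : x ∈ f.roots := by rw [mem_roots hfne]; exact hx0
    have hcount : f.roots.count x = 1 :=
      Multiset.count_eq_one_of_mem (nodup_roots hsep) hmem
    have : D.roots.count x = 2 := by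
      rw [hDf, roots_pow, Multiset.count_nsmul, hcount]
    rwa [count_roots] at this
end

section
/- Let k be an algebraically closed field of characteristic 3 and let i ∈ k satisfy i² = −1. There exist polynomials b₄, b₆ ∈ k[t] with deg b₄ ≤ 4 and deg b₆ ≤ 6 such that, with b₂ = t, the discriminant Δ = −b₂²(b₂b₆ − b₄²) + b₄³ equals t¹² + t¹⁰ − t⁸ + t⁶ − t⁴ + t² + 1 = (t − 1)⁴(t + 1)⁴(t² + 1)². Moreover the roots of this polynomial are exactly 1 and −1, each with multiplicity 4, and i and −i, each with multiplicity 2; these four roots are distinct and nonzero. (This realizes the configuration I₄² I₂² of multiplicative fibres on a rational elliptic surface in characteristic 3; this configuration exists in characteristic 3 but not in characteristic 2.) -/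
/-! In characteristic 3 both the discriminant identity for `b₄ = t⁴ + 1`, `b₆ = t⁵ + t³ + t` and
the factorization of the sextic hold because the two sides differ by multiples of 3. Since
`t² + 1 = (t - i)(t + i)`, the discriminant is a product of linear factors, so its roots with
multiplicities are read off that factorization; the roots `1, -1, i, -i` are distinct and
nonzero as soon as `2 ≠ 0`. -/

open Polynomial

section CharThree

variable {R : Type*} [CommRing R] [CharP R 3]

theorem sextic_eq_mul_pow_charThree :
    (X ^ 12 + X ^ 10 - X ^ 8 + X ^ 6 - X ^ 4 + X ^ 2 + 1 : R[X]) =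
      (X - 1) ^ 4 * (X + 1) ^ 4 * (X ^ 2 + 1) ^ 2 := by
  linear_combination ((X : R[X]) ^ 10 - X ^ 6 + X ^ 2) * CharP.ofNat_eq_zero R[X] 3

theorem discriminant_eq_sextic_charThree :
    -(X : R[X]) ^ 2 * (X * (X ^ 5 + X ^ 3 + X) - (X ^ 4 + 1) ^ 2) + (X ^ 4 + 1) ^ 3 =
      X ^ 12 + X ^ 10 - X ^ 8 + X ^ 6 - X ^ 4 + X ^ 2 + 1 := by
  linear_combination ((X : R[X]) ^ 8 + X ^ 4) * CharP.ofNat_eq_zero R[X] 3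

theorem two_ne_zero_of_charP_three [Nontrivial R] : (2 : R) ≠ 0 := fun h =>
  one_ne_zero (by linear_combination CharP.ofNat_eq_zero R 3 - h : (1 : R) = 0)

end CharThree

section SquareRootOfMinusOne

variable {R : Type*} [CommRing R] {i : R}

theorem X_sq_add_one_eq_mul (hi : i ^ 2 = -1) :
    (X ^ 2 + 1 : R[X]) = (X - C i) * (X - C (-i)) := by
  have hiC : (C i : R[X]) ^ 2 = -1 := by rw [← C_pow, hi, C_neg, C_1]
  rw [C_neg]
  linear_combination hiC

theorem mul_pow_eq_prod_X_sub_C (hi : i ^ 2 = -1) :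
    (X - 1 : R[X]) ^ 4 * (X + 1) ^ 4 * (X ^ 2 + 1) ^ 2 =
      ((Multiset.replicate 4 1 + Multiset.replicate 4 (-1) + Multiset.replicate 2 i +
        Multiset.replicate 2 (-i)).map fun a => X - C a).prod := by
  simp only [Multiset.map_add, Multiset.prod_add, Multiset.map_replicate, Multiset.prod_replicate,
    X_sq_add_one_eq_mul hi, C_1, C_neg, sub_neg_eq_add, mul_pow, mul_assoc]

theorem list_nodup_zero_one_neg_one_sqrt_neg_one [NoZeroDivisors R] (h2 : (2 : R) ≠ 0)
    (hi : i ^ 2 = -1) : ([0, 1, -1, i, -i] : List R).Nodup := by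
  have h01 : (0 : R) ≠ 1 := fun h => h2 (by linear_combination -2 * h)
  have h1n1 : (1 : R) ≠ -1 := fun h => h2 (by linear_combination h)
  have h0i : 0 ≠ i := by rintro rfl; exact h1n1 (by linear_combination 2 * hi)
  have h1i : 1 ≠ i := by rintro rfl; exact h1n1 (by linear_combination hi)
  have h1ni : 1 ≠ -i := by intro h; exact h1n1 (by linear_combination hi - (i - 1) * h)
  have hn1i : -1 ≠ i := fun h => h1ni (by rw [← h, neg_neg])
  have hn1ni : -1 ≠ -i := fun h => h1i (neg_inj.mp h)
  have hini : i ≠ -i := fun h =>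
    h0i ((mul_eq_zero.mp (by linear_combination h : 2 * i = 0)).resolve_left h2).symm
  simp [h01, h1n1, h0i, h1i, h1ni, hn1i, hn1ni, hini, h01.symm, h0i.symm]

variable [IsDomain R]

theorem roots_mul_pow_eq (hi : i ^ 2 = -1) :
    ((X - 1) ^ 4 * (X + 1) ^ 4 * (X ^ 2 + 1) ^ 2 : R[X]).roots =
      Multiset.replicate 4 1 + Multiset.replicate 4 (-1) + Multiset.replicate 2 i +
        Multiset.replicate 2 (-i) := by
  rw [mul_pow_eq_prod_X_sub_C hi, roots_multiset_prod_X_sub_C]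

theorem eval_mul_pow_eq_zero_iff (hi : i ^ 2 = -1) (x : R) :
    ((X - 1) ^ 4 * (X + 1) ^ 4 * (X ^ 2 + 1) ^ 2 : R[X]).eval x = 0 ↔
      x = 1 ∨ x = -1 ∨ x = i ∨ x = -i := by
  have hmonic : ((X - 1) ^ 4 * (X + 1) ^ 4 * (X ^ 2 + 1) ^ 2 : R[X]).Monic := by monicity!
  rw [← IsRoot.def, ← mem_roots hmonic.ne_zero, roots_mul_pow_eq hi]
  simp only [Multiset.mem_add, Multiset.mem_replicate]
  tauto

theorem rootMultiplicity_mul_pow (h2 : (2 : R) ≠ 0) (hi : i ^ 2 = -1) :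
    let P : R[X] := (X - 1) ^ 4 * (X + 1) ^ 4 * (X ^ 2 + 1) ^ 2
    P.rootMultiplicity 1 = 4 ∧ P.rootMultiplicity (-1) = 4 ∧
      P.rootMultiplicity i = 2 ∧ P.rootMultiplicity (-i) = 2 := by
  classical
  have hnodup := list_nodup_zero_one_neg_one_sqrt_neg_one h2 hi
  simp only [List.nodup_cons, List.mem_cons, List.not_mem_nil, or_false, not_or] at hnodup
  obtain ⟨-, ⟨h1n1, h1i, h1ni⟩, ⟨hn1i, hn1ni⟩, hini, -⟩ := hnodup
  simp [← count_roots, roots_mul_pow_eq hi, h1n1, h1i, h1ni, hn1i, hn1ni, hini,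
    Ne.symm h1n1, Ne.symm h1i, Ne.symm h1ni, Ne.symm hn1i, Ne.symm hn1ni, Ne.symm hini]

end SquareRootOfMinusOne

theorem stmt16_general {k : Type*} [Field k] [CharP k 3]
    (i : k) (hi : i ^ 2 = -1)
    (D : k[X]) (hD : D = X ^ 12 + X ^ 10 - X ^ 8 + X ^ 6 - X ^ 4 + X ^ 2 + 1) :
    (∃ b₄ b₆ : k[X], b₄.degree ≤ 4 ∧ b₆.degree ≤ 6 ∧
      -(X : k[X]) ^ 2 * (X * b₆ - b₄ ^ 2) + b₄ ^ 3 = D) ∧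
    D = (X - 1) ^ 4 * (X + 1) ^ 4 * (X ^ 2 + 1) ^ 2 ∧
    (∀ x : k, D.eval x = 0 ↔ x = 1 ∨ x = -1 ∨ x = i ∨ x = -i) ∧
    D.rootMultiplicity 1 = 4 ∧ D.rootMultiplicity (-1) = 4 ∧
    D.rootMultiplicity i = 2 ∧ D.rootMultiplicity (-i) = 2 ∧
    ([1, -1, i, -i] : List k).Nodup ∧
    (∀ x ∈ ([1, -1, i, -i] : List k), x ≠ 0) := by
  have h2 : (2 : k) ≠ 0 := two_ne_zero_of_charP_three
  obtain ⟨hzero, hnodup⟩ := List.nodup_cons.mp (list_nodup_zero_one_neg_one_sqrt_neg_one h2 hi)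
  subst hD
  refine ⟨⟨X ^ 4 + 1, X ^ 5 + X ^ 3 + X, by compute_degree!, by compute_degree!,
    discriminant_eq_sextic_charThree⟩, sextic_eq_mul_pow_charThree, ?_⟩
  obtain ⟨hm1, hmn1, hmi, hmni⟩ := rootMultiplicity_mul_pow h2 hi
  rw [sextic_eq_mul_pow_charThree]
  exact ⟨eval_mul_pow_eq_zero_iff hi, hm1, hmn1, hmi, hmni, hnodup,
    fun x hx hx0 => hzero (hx0 ▸ hx)⟩

theorem stmt16 {k : Type*} [Field k] [IsAlgClosed k] [CharP k 3]
    (i : k) (hi : i ^ 2 = -1)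
    (D : k[X]) (hD : D = X ^ 12 + X ^ 10 - X ^ 8 + X ^ 6 - X ^ 4 + X ^ 2 + 1) :
    (∃ b₄ b₆ : k[X], b₄.degree ≤ 4 ∧ b₆.degree ≤ 6 ∧
      -(X : k[X]) ^ 2 * (X * b₆ - b₄ ^ 2) + b₄ ^ 3 = D) ∧
    D = (X - 1) ^ 4 * (X + 1) ^ 4 * (X ^ 2 + 1) ^ 2 ∧
    (∀ x : k, D.eval x = 0 ↔ x = 1 ∨ x = -1 ∨ x = i ∨ x = -i) ∧
    D.rootMultiplicity 1 = 4 ∧ D.rootMultiplicity (-1) = 4 ∧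
    D.rootMultiplicity i = 2 ∧ D.rootMultiplicity (-i) = 2 ∧
    ([1, -1, i, -i] : List k).Nodup ∧
    (∀ x ∈ ([1, -1, i, -i] : List k), x ≠ 0) :=
  stmt16_general i hi D hD
end
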